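/- Fix positive reals ν_a, ν_o, h_a, h_o, α_c, ε and set θ = 1. For real t ≠ 0 define χ_j(t) = i·t·h_j²/ν_j, λ_j(t) = (χ_j(t) − √(χ_j(t))·√(χ_j(t)+4))/2 (principal complex square root, j ∈ {a,o}), and the convergence factor ξ(t) = |(ε·h_a·λ_o(t)/(h_o·λ_a(t))) / (ν_a·χ_a(t)/(α_c·h_a·λ_a(t)) − 1)|. Then ξ(t) tends to ε·√(ν_a/ν_o) as t → 0 with t ≠ 0. -/

import Mathlib

set_option maxHeartbeats 1000000

open Filter Topology

/-- Principal complex square root. -/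
noncomputable def csqrt (z : ℂ) : ℂ := z ^ ((1 : ℂ) / 2)

/-- `λ(χ) = (χ − √χ·√(χ+4))/2`. -/
noncomputable def lamM (χ : ℂ) : ℂ := (χ - csqrt χ * csqrt (χ + 4)) / 2

/-- `χ_j(t) = i·t·h_j²/ν_j`. -/
noncomputable def chi (h ν t : ℝ) : ℂ := Complex.I * t * (h : ℂ) ^ 2 / (ν : ℂ)

/-- The SWR convergence factor for `θ = 1`:
`ξ(t) = |(ε·h_a·λ_o/(h_o·λ_a)) / (ν_a·χ_a/(α_c·h_a·λ_a) − 1)|`. -/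
noncomputable def xiOne (νa νo ha ho αc ε : ℝ) (t : ℝ) : ℝ :=
  ‖(((ε : ℂ) * (ha : ℂ) * lamM (chi ho νo t) / ((ho : ℂ) * lamM (chi ha νa t)))
    / ((νa : ℂ) * chi ha νa t / ((αc : ℂ) * (ha : ℂ) * lamM (chi ha νa t)) - 1))‖

lemma csqrt_mul_self (z : ℂ) : csqrt z * csqrt z = z := by
  rcases eq_or_ne z 0 with rfl | hz
  · simp [csqrt, Complex.zero_cpow (by norm_num : (1:ℂ)/2 ≠ 0)]
  · rw [csqrt, ← Complex.cpow_add _ _ hz]; norm_num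

lemma csqrt_eq_zero_iff {z : ℂ} : csqrt z = 0 ↔ z = 0 := by
  simp [csqrt, Complex.cpow_eq_zero_iff]

lemma csqrt_ofReal_mul {r : ℝ} (hr : 0 < r) (z : ℂ) :
    csqrt ((r : ℂ) * z) = (Real.sqrt r : ℂ) * csqrt z := by
  have hs : ((Real.sqrt r : ℝ) : ℂ) = (r : ℂ) ^ ((1:ℂ)/2) := by
    rw [Real.sqrt_eq_rpow, Complex.ofReal_cpow hr.le]; norm_num
  rcases eq_or_ne z 0 with rfl | hz
  · simp [csqrt, Complex.zero_cpow (by norm_num : (1:ℂ)/2 ≠ 0)]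
  · have hr' : (r : ℂ) ≠ 0 := by exact_mod_cast hr.ne'
    rw [csqrt, Complex.cpow_def_of_ne_zero (mul_ne_zero hr' hz),
      Complex.log_ofReal_mul hr hz, add_mul, Complex.exp_add, hs,
      Complex.cpow_def_of_ne_zero hr', csqrt, Complex.cpow_def_of_ne_zero hz,
      Complex.ofReal_log hr.le]

lemma csqrt_four : csqrt (4 : ℂ) = 2 := by
  rw [csqrt, show ((1:ℂ)/2) = (2⁻¹ : ℂ) by norm_num,
    show ((4:ℂ)) = (2:ℂ) ^ (2:ℕ) by norm_num,
    Complex.sq_cpow_two_inv (by norm_num)]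

lemma csqrt_tendsto_zero : Tendsto csqrt (𝓝 0) (𝓝 0) := by
  have h := Complex.continuousAt_cpow_zero_of_re_pos (z := (1:ℂ)/2) (by norm_num)
  have h2 : Tendsto (fun z : ℂ => ((z, (1:ℂ)/2) : ℂ × ℂ)) (𝓝 0) (𝓝 ((0 : ℂ), (1:ℂ)/2)) :=
    (continuous_id.prodMk continuous_const).tendsto 0
  have h3 := h.tendsto.comp h2
  have h4 : Tendsto (fun z : ℂ => z ^ ((1:ℂ)/2)) (𝓝 0) (𝓝 ((0:ℂ) ^ ((1:ℂ)/2))) := by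
    simpa [Function.comp_def] using h3
  have he : csqrt = fun z : ℂ => z ^ ((1:ℂ)/2) := rfl
  rw [he]
  simpa [Complex.zero_cpow (by norm_num : (1:ℂ)/2 ≠ 0)] using h4

lemma csqrt_continuousAt_four : ContinuousAt csqrt 4 :=
  continuousAt_cpow_const (by norm_num [Complex.mem_slitPlane_iff])

noncomputable def sfun (t : ℝ) : ℂ := csqrt (Complex.I * t)
noncomputable def gfun (h ν t : ℝ) : ℂ := (csqrt (chi h ν t) - csqrt (chi h ν t + 4)) / 2

lemma lamM_eq (χ : ℂ) : lamM χ = csqrt χ * ((csqrt χ - csqrt (χ + 4)) / 2) := by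
  rw [lamM]
  nth_rewrite 1 [← csqrt_mul_self χ]
  ring

lemma chi_eq (h ν t : ℝ) : chi h ν t = ((h^2/ν : ℝ) : ℂ) * (Complex.I * t) := by
  rw [chi]; push_cast; ring

lemma csqrt_chi {h ν : ℝ} (hh : 0 < h) (hν : 0 < ν) (t : ℝ) :
    csqrt (chi h ν t) = (Real.sqrt (h^2/ν) : ℂ) * sfun t := by
  rw [chi_eq, csqrt_ofReal_mul (div_pos (pow_pos hh 2) hν)]; rfl

lemma lamM_chi {h ν : ℝ} (hh : 0 < h) (hν : 0 < ν) (t : ℝ) :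
    lamM (chi h ν t) = (Real.sqrt (h^2/ν) : ℂ) * sfun t * gfun h ν t := by
  rw [lamM_eq]
  unfold gfun
  rw [csqrt_chi hh hν]

lemma chi_tendsto (h ν : ℝ) : Tendsto (fun t : ℝ => chi h ν t) (𝓝 0) (𝓝 0) := by
  have hc : Continuous fun t : ℝ => chi h ν t := by
    unfold chi; fun_prop
  have := hc.tendsto 0
  simpa [chi] using this

lemma gfun_tendsto (h ν : ℝ) : Tendsto (fun t : ℝ => gfun h ν t) (𝓝 0) (𝓝 (-1)) := by
  have h1 : Tendsto (fun t : ℝ => csqrt (chi h ν t)) (𝓝 0) (𝓝 0) :=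
    csqrt_tendsto_zero.comp (chi_tendsto h ν)
  have h2 : Tendsto (fun t : ℝ => csqrt (chi h ν t + 4)) (𝓝 0) (𝓝 2) := by
    have ha : Tendsto (fun t : ℝ => chi h ν t + 4) (𝓝 0) (𝓝 4) := by
      simpa using (chi_tendsto h ν).add_const (4 : ℂ)
    have := csqrt_continuousAt_four.tendsto.comp ha
    simpa [Function.comp_def, csqrt_four] using this
  have h3 := (h1.sub h2).div_const (2 : ℂ)
  unfold gfun
  convert h3 using 2
  norm_num

lemma sfun_tendsto : Tendsto sfun (𝓝 0) (𝓝 0) := by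
  have h1 : Tendsto (fun t : ℝ => Complex.I * (t : ℂ)) (𝓝 0) (𝓝 0) := by
    have hc : Continuous fun t : ℝ => Complex.I * (t : ℂ) := by fun_prop
    simpa using hc.tendsto 0
  exact csqrt_tendsto_zero.comp h1


noncomputable def Gfun (νa νo ha ho αc ε : ℝ) (t : ℝ) : ℂ :=
  ((ε:ℂ) * (ha:ℂ) * (Real.sqrt (ho^2/νo) : ℂ) * gfun ho νo t
      / ((ho:ℂ) * (Real.sqrt (ha^2/νa) : ℂ) * gfun ha νa t))
    / ((νa:ℂ) * (Real.sqrt (ha^2/νa) : ℂ) * sfun t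
      / ((αc:ℂ) * (ha:ℂ) * gfun ha νa t) - 1)

lemma key_eq (νa νo ha ho αc ε : ℝ)
    (hνa : 0 < νa) (hνo : 0 < νo) (hha : 0 < ha) (hho : 0 < ho)
    (hαc : 0 < αc) (hε : 0 < ε) (t : ℝ) (ht : t ≠ 0) :
    xiOne νa νo ha ho αc ε t = ‖Gfun νa νo ha ho αc ε t‖ := by
  have hA : (0:ℝ) < Real.sqrt (ha^2/νa) := Real.sqrt_pos.2 (div_pos (pow_pos hha 2) hνa)
  have hA' : ((Real.sqrt (ha^2/νa) : ℝ) : ℂ) ≠ 0 := Complex.ofReal_ne_zero.2 hA.ne'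
  have hho' : ((ho:ℝ):ℂ) ≠ 0 := Complex.ofReal_ne_zero.2 hho.ne'
  have hha' : ((ha:ℝ):ℂ) ≠ 0 := Complex.ofReal_ne_zero.2 hha.ne'
  have hαc' : ((αc:ℝ):ℂ) ≠ 0 := Complex.ofReal_ne_zero.2 hαc.ne'
  have hs : sfun t ≠ 0 := by
    rw [sfun, Ne, csqrt_eq_zero_iff]
    exact mul_ne_zero Complex.I_ne_zero (Complex.ofReal_ne_zero.2 ht)
  have hchisq : chi ha νa t =
      ((Real.sqrt (ha^2/νa) : ℂ) * sfun t) * ((Real.sqrt (ha^2/νa) : ℂ) * sfun t) := by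
    rw [← csqrt_mul_self (chi ha νa t), csqrt_chi hha hνa]
  unfold xiOne Gfun
  rw [lamM_chi hho hνo, lamM_chi hha hνa, hchisq]
  congr 1
  set sA : ℂ := ((Real.sqrt (ha^2/νa) : ℝ) : ℂ) with hsA
  set sO : ℂ := ((Real.sqrt (ho^2/νo) : ℝ) : ℂ) with hsO
  set ga : ℂ := gfun ha νa t with hga
  set go : ℂ := gfun ho νo t with hgo
  set st : ℂ := sfun t with hst
  clear_value sA sO ga go st
  by_cases hg : ga = 0
  · simp only [hg, mul_zero, zero_mul, div_zero, zero_div]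
  · field_simp


lemma Gfun_tendsto (νa νo ha ho αc ε : ℝ)
    (hνa : 0 < νa) (hνo : 0 < νo) (hha : 0 < ha) (hho : 0 < ho)
    (hαc : 0 < αc) (hε : 0 < ε) :
    Tendsto (Gfun νa νo ha ho αc ε) (𝓝 0)
      (𝓝 (((-(ε * Real.sqrt (νa/νo)) : ℝ) : ℂ))) := by
  have hA : (0:ℝ) < Real.sqrt (ha^2/νa) := Real.sqrt_pos.2 (div_pos (pow_pos hha 2) hνa)
  have hO : (0:ℝ) < Real.sqrt (ho^2/νo) := Real.sqrt_pos.2 (div_pos (pow_pos hho 2) hνo)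
  have hA' : ((Real.sqrt (ha^2/νa) : ℝ) : ℂ) ≠ 0 := Complex.ofReal_ne_zero.2 hA.ne'
  have hO' : ((Real.sqrt (ho^2/νo) : ℝ) : ℂ) ≠ 0 := Complex.ofReal_ne_zero.2 hO.ne'
  have hho' : ((ho:ℝ):ℂ) ≠ 0 := Complex.ofReal_ne_zero.2 hho.ne'
  have hha' : ((ha:ℝ):ℂ) ≠ 0 := Complex.ofReal_ne_zero.2 hha.ne'
  have hαc' : ((αc:ℝ):ℂ) ≠ 0 := Complex.ofReal_ne_zero.2 hαc.ne'
  have hGlim : Tendsto (Gfun νa νo ha ho αc ε) (𝓝 0)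
      (𝓝 (((ε:ℂ) * (ha:ℂ) * (Real.sqrt (ho^2/νo) : ℂ) * (-1)
        / ((ho:ℂ) * (Real.sqrt (ha^2/νa) : ℂ) * (-1)))
      / ((νa:ℂ) * (Real.sqrt (ha^2/νa) : ℂ) * 0
        / ((αc:ℂ) * (ha:ℂ) * (-1)) - 1))) := by
    unfold Gfun
    apply Tendsto.div
    · apply Tendsto.div
      · exact (tendsto_const_nhds.mul (gfun_tendsto ho νo))
      · exact (tendsto_const_nhds.mul (gfun_tendsto ha νa))
      · exact mul_ne_zero (mul_ne_zero hho' hA') (by norm_num)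
    · apply Tendsto.sub_const
      apply Tendsto.div
      · exact tendsto_const_nhds.mul sfun_tendsto
      · exact tendsto_const_nhds.mul (gfun_tendsto ha νa)
      · exact mul_ne_zero (mul_ne_zero hαc' hha') (by norm_num)
    · simp
  have hval : (((ε:ℂ) * (ha:ℂ) * (Real.sqrt (ho^2/νo) : ℂ) * (-1)
        / ((ho:ℂ) * (Real.sqrt (ha^2/νa) : ℂ) * (-1)))
      / ((νa:ℂ) * (Real.sqrt (ha^2/νa) : ℂ) * 0
        / ((αc:ℂ) * (ha:ℂ) * (-1)) - 1))
      = ((-(ε * Real.sqrt (νa/νo)) : ℝ) : ℂ) := by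
    have hre : ε * ha * Real.sqrt (ho^2/νo) / (ho * Real.sqrt (ha^2/νa))
        = ε * Real.sqrt (νa/νo) := by
      rw [Real.sqrt_div (sq_nonneg ho) νo, Real.sqrt_div (sq_nonneg ha) νa,
        Real.sqrt_sq hho.le, Real.sqrt_sq hha.le, Real.sqrt_div hνa.le]
      have h1 : Real.sqrt νo ≠ 0 := (Real.sqrt_pos.2 hνo).ne'
      have h2 : Real.sqrt νa ≠ 0 := (Real.sqrt_pos.2 hνa).ne'
      field_simp
    rw [← hre]
    push_cast
    field_simp
    ring
  rwa [hval] at hGlim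

/-- For `θ = 1` the convergence factor tends to `ε·√(ν_a/ν_o)` as `t → 0`, `t ≠ 0`. -/
theorem xi_low_frequency_limit_theta_one
    (νa νo ha ho αc ε : ℝ)
    (hνa : 0 < νa) (hνo : 0 < νo) (hha : 0 < ha) (hho : 0 < ho)
    (hαc : 0 < αc) (hε : 0 < ε) :
    Tendsto (xiOne νa νo ha ho αc ε) (𝓝[≠] (0 : ℝ))
      (𝓝 (ε * Real.sqrt (νa / νo))) := by
  have hGlim := Gfun_tendsto νa νo ha ho αc ε hνa hνo hha hho hαc hε
  have habs : Tendsto (fun t => ‖Gfun νa νo ha ho αc ε t‖) (𝓝[≠] (0:ℝ))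
      (𝓝 (ε * Real.sqrt (νa/νo))) := by
    have h0 : Tendsto (Gfun νa νo ha ho αc ε) (𝓝[≠] (0:ℝ))
        (𝓝 (((-(ε * Real.sqrt (νa/νo)) : ℝ) : ℂ))) := hGlim.mono_left nhdsWithin_le_nhds
    have h1 := (continuous_norm.tendsto _).comp h0
    have h2 : ‖(((-(ε * Real.sqrt (νa/νo)) : ℝ) : ℂ))‖ = ε * Real.sqrt (νa/νo) := by
      rw [Complex.norm_real, Real.norm_eq_abs, abs_neg, abs_of_nonneg]
      positivity
    rw [h2] at h1
    exact h1
  refine habs.congr' ?_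
  filter_upwards [self_mem_nhdsWithin] with t ht
  exact (key_eq νa νo ha ho αc ε hνa hνo hha hho hαc hε t ht).symm
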